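/- For every x ∈ [0,1], the Lebesgue measure of the distal set D_L(x) = {y : lim inf_{n→∞} |Lⁿ(x) - Lⁿ(y)| > 0} is zero. -/

import Mathlib

/-- The first Lüroth digit of `x`: the unique integer `a ≥ 2` with
`1/a < x ≤ 1/(a-1)` (for `x ∈ (0,1]`). -/
noncomputable def lurothDigit (x : ℝ) : ℕ := ⌊1 / x⌋₊ + 1

/-- The Lüroth map on `[0,1]`. -/
noncomputable def lurothMap (x : ℝ) : ℝ :=
  if x = 0 then 0
  else (lurothDigit x : ℝ) * ((lurothDigit x : ℝ) - 1) * x - ((lurothDigit x : ℝ) - 1)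

/-- The Lüroth digit sequence of `x` (0-indexed: `lurothDigitSeq x n = a_{n+1}(x)`). -/
noncomputable def lurothDigitSeq (x : ℝ) (n : ℕ) : ℕ := lurothDigit (lurothMap^[n] x)

/-- The `n`-th term of the Lüroth series associated with the digit sequence `a`. -/
noncomputable def lurothTerm (a : ℕ → ℕ) (n : ℕ) : ℝ :=
  (∏ j ∈ Finset.range n, (1 : ℝ) / ((a j : ℝ) * ((a j : ℝ) - 1))) * (1 / (a n : ℝ))

/-- The value of the Lüroth series with digit sequence `a`. -/
noncomputable def lurothVal (a : ℕ → ℕ) : ℝ := ∑' n, lurothTerm a n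

/-- The finite Lüroth sum `⟨c₁, …, cₙ⟩`. -/
noncomputable def lurothFinSum (c : ℕ → ℕ) (n : ℕ) : ℝ := ∑ k ∈ Finset.range n, lurothTerm c k

/-- The fundamental interval of level `n` with digits `c`. -/
noncomputable def fundamentalInterval (n : ℕ) (c : ℕ → ℕ) : Set ℝ :=
  {x | x ∈ Set.Ioc (0 : ℝ) 1 ∧ ∀ j < n, lurothDigitSeq x j = c j}

/-!
On the fundamental interval with prescribed digits `c₀, …, c_{m-1}` the map `Lᵐ` is an increasing
affine bijection onto `(0,1]`; hence that interval has length `∏ 1 / (cⱼ (cⱼ - 1))`, it has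
diameter at most `2⁻ᵐ`, and `L` does not increase the measure of subsets of `(0,1]`.

Given `ε > 0`, choose `m` and `K` with `2⁻ᵐ < ε` and `1 / (K - 1) < ε`, and let `t` be the digit
sequence of `x` with every digit outside `[2, K)` replaced by `K`. If the digits of `y` agree with
`t` on a block of length `m`, the orbits of `x` and `y` come `ε`-close during that block. Given the
blocks before it, each block is matched on a set of relative measure at least `(K (K - 1))⁻ᵐ`, so
the set of `y` that match no block is null. Applied to `Lᴺ⁺¹ x` for every `N` and every
`ε = 1 / (i + 1)`, this covers the distal set up to the point `0`.
-/

open Set MeasureTheory Filter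

lemma lurothDigit_eq_iff {x : ℝ} (hx : 0 < x) {k : ℕ} (hk : 2 ≤ k) :
    lurothDigit x = k ↔ 1 / (k : ℝ) < x ∧ x ≤ 1 / ((k : ℝ) - 1) := by
  have hk' : (2 : ℝ) ≤ k := by exact_mod_cast hk
  have hfloor : lurothDigit x = k ↔ ⌊1 / x⌋₊ = k - 1 := by unfold lurothDigit; omega
  rw [hfloor, Nat.floor_eq_iff (by positivity), Nat.cast_sub (by omega), Nat.cast_one,
    sub_add_cancel, le_one_div (by linarith) hx, one_div_lt hx (by linarith)]
  exact and_comm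

lemma two_le_lurothDigit {x : ℝ} (hx : x ∈ Ioc (0 : ℝ) 1) : 2 ≤ lurothDigit x := by
  have : 1 ≤ ⌊1 / x⌋₊ :=
    Nat.le_floor (by rw [Nat.cast_one, le_one_div one_pos hx.1]; simpa using hx.2)
  unfold lurothDigit; omega

lemma lurothDigit_bounds {x : ℝ} (hx : x ∈ Ioc (0 : ℝ) 1) :
    1 / (lurothDigit x : ℝ) < x ∧ x ≤ 1 / ((lurothDigit x : ℝ) - 1) :=
  (lurothDigit_eq_iff hx.1 (two_le_lurothDigit hx)).mp rfl

lemma le_of_le_lurothDigit {x : ℝ} (hx : x ∈ Ioc (0 : ℝ) 1) {K : ℕ} (hK : 2 ≤ K)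
    (hKx : K ≤ lurothDigit x) : x ≤ 1 / ((K : ℝ) - 1) := by
  have hK' : (2 : ℝ) ≤ K := by exact_mod_cast hK
  have hKx' : (K : ℝ) ≤ lurothDigit x := by exact_mod_cast hKx
  exact (lurothDigit_bounds hx).2.trans (one_div_le_one_div_of_le (by linarith) (by linarith))

lemma lurothMap_of_ne_zero {x : ℝ} (hx : x ≠ 0) :
    lurothMap x = lurothDigit x * ((lurothDigit x : ℝ) - 1) * x - ((lurothDigit x : ℝ) - 1) :=
  if_neg hx

lemma lurothMap_of_notMem {x : ℝ} (hx : x ∉ Ioc (0 : ℝ) 1) : lurothMap x = 0 := by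
  by_cases hx0 : x = 0
  · simp [lurothMap, hx0]
  have hinv : 1 / x < 1 := by
    rcases lt_or_gt_of_ne hx0 with hneg | hpos
    · exact (one_div_neg.mpr hneg).trans one_pos
    · exact (div_lt_one hpos).mpr (not_le.mp fun h => hx ⟨hpos, h⟩)
  have hd : lurothDigit x = 1 := by rw [lurothDigit, Nat.floor_eq_zero.mpr hinv]
  simp [lurothMap_of_ne_zero hx0, hd]

lemma mapsTo_lurothMap_Ioc : MapsTo lurothMap (Ioc 0 1) (Ioc 0 1) := by
  intro x hx
  obtain ⟨hlo, hhi⟩ := lurothDigit_bounds hx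
  have hk : (2 : ℝ) ≤ lurothDigit x := by exact_mod_cast two_le_lurothDigit hx
  rw [lurothMap_of_ne_zero hx.1.ne']
  rw [div_lt_iff₀ (by linarith)] at hlo
  rw [le_div_iff₀ (by linarith)] at hhi
  constructor <;> nlinarith

lemma mem_Ioc_of_lurothMap_mem_Ioc {x : ℝ} (hx : lurothMap x ∈ Ioc (0 : ℝ) 1) :
    x ∈ Ioc (0 : ℝ) 1 := by
  by_contra h
  rw [lurothMap_of_notMem h] at hx
  exact lt_irrefl _ hx.1

lemma lurothMap_mem_Icc (x : ℝ) : lurothMap x ∈ Icc (0 : ℝ) 1 := by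
  by_cases hx : x ∈ Ioc (0 : ℝ) 1
  · exact Ioc_subset_Icc_self (mapsTo_lurothMap_Ioc hx)
  · rw [lurothMap_of_notMem hx]; simp

lemma mapsTo_lurothMap_Icc : MapsTo lurothMap (Icc 0 1) (Icc 0 1) :=
  fun x _ => lurothMap_mem_Icc x

lemma preimage_iterate_lurothMap_subset {S : Set ℝ} (hS : S ⊆ Ioc 0 1) (n : ℕ) :
    lurothMap^[n] ⁻¹' S ⊆ Ioc 0 1 := by
  induction n with
  | zero => exact hS
  | succ n ih =>
    intro y hy
    exact mem_Ioc_of_lurothMap_mem_Ioc (ih (by rwa [mem_preimage, ← Function.iterate_succ_apply]))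

lemma lurothDigitSeq_add (x : ℝ) (n p : ℕ) :
    lurothDigitSeq x (n + p) = lurothDigitSeq (lurothMap^[n] x) p := by
  simp [lurothDigitSeq, add_comm n p, Function.iterate_add_apply]

lemma lurothDigitSeq_succ (x : ℝ) (j : ℕ) :
    lurothDigitSeq x (j + 1) = lurothDigitSeq (lurothMap x) j := by
  simp [lurothDigitSeq, Function.iterate_succ_apply]

lemma measurable_lurothDigit : Measurable lurothDigit :=
  (Nat.measurable_floor.comp (measurable_const.div measurable_id)).add_const 1

lemma measurable_lurothMap : Measurable lurothMap := by
  have hd : Measurable fun x : ℝ => (lurothDigit x : ℝ) :=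
    measurable_from_top.comp measurable_lurothDigit
  refine Measurable.ite (measurableSet_singleton 0) measurable_const ?_
  fun_prop

lemma setOf_lurothDigit_eq_and_lurothMap_mem {k : ℕ} (hk : 2 ≤ k) {S : Set ℝ}
    (hS : S ⊆ Ioc 0 1) :
    {y | lurothDigit y = k ∧ lurothMap y ∈ S} =
      (fun y => (k : ℝ) * (k - 1) * y - (k - 1)) ⁻¹' S := by
  have hk' : (2 : ℝ) ≤ k := by exact_mod_cast hk
  ext y
  constructor
  · rintro ⟨hd, hyS⟩
    have hy := mem_Ioc_of_lurothMap_mem_Ioc (hS hyS)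
    rwa [lurothMap_of_ne_zero hy.1.ne', hd] at hyS
  · intro hyS
    have hy := hS hyS
    simp only [mem_Ioc] at hy
    obtain ⟨hlo, hhi⟩ := hy
    have hkk : (0 : ℝ) < k * (k - 1) := by nlinarith
    have hd : lurothDigit y = k := by
      rw [lurothDigit_eq_iff (by nlinarith) hk, div_lt_iff₀ (by linarith),
        le_div_iff₀ (by linarith)]
      constructor <;> nlinarith
    refine ⟨hd, ?_⟩
    rwa [lurothMap_of_ne_zero (by rintro rfl; linarith), hd]

lemma volume_setOf_lurothDigit_eq_and_lurothMap_mem {k : ℕ} (hk : 2 ≤ k) {S : Set ℝ}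
    (hS : S ⊆ Ioc 0 1) :
    volume {y | lurothDigit y = k ∧ lurothMap y ∈ S} =
      ENNReal.ofReal (1 / (k * (k - 1))) * volume S := by
  have hk' : (2 : ℝ) ≤ k := by exact_mod_cast hk
  have hpos : (0 : ℝ) < k * (k - 1) := by nlinarith
  rw [setOf_lurothDigit_eq_and_lurothMap_mem hk hS,
    show (fun y : ℝ => (k : ℝ) * (k - 1) * y - (k - 1)) =
      (· + -((k : ℝ) - 1)) ∘ (((k : ℝ) * (k - 1)) * ·) from rfl,
    preimage_comp, Real.volume_preimage_mul_left hpos.ne', measure_preimage_add_right,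
    abs_of_pos (inv_pos.mpr hpos), one_div]

/-- The length of the fundamental interval of level `n` with digits `c`. -/
noncomputable def cylinderLength (c : ℕ → ℕ) (n : ℕ) : ℝ :=
  ∏ j ∈ Finset.range n, 1 / ((c j : ℝ) * (c j - 1))

lemma fundamentalInterval_zero (c : ℕ → ℕ) : fundamentalInterval 0 c = Ioc 0 1 := by
  ext; simp [fundamentalInterval]

lemma fundamentalInterval_succ (n : ℕ) (c : ℕ → ℕ) :
    fundamentalInterval (n + 1) c =
      {y | lurothDigit y = c 0 ∧ lurothMap y ∈ fundamentalInterval n (fun j => c (j + 1))} := by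
  ext y
  simp only [fundamentalInterval, mem_ofPred_eq]
  constructor
  · rintro ⟨hy, hdig⟩
    refine ⟨hdig 0 n.succ_pos, mapsTo_lurothMap_Ioc hy, fun j hj => ?_⟩
    rw [← lurothDigitSeq_succ]
    exact hdig (j + 1) (by omega)
  · rintro ⟨hd, hLy, hdig⟩
    refine ⟨mem_Ioc_of_lurothMap_mem_Ioc hLy, fun j hj => ?_⟩
    cases j with
    | zero => exact hd
    | succ j => rw [lurothDigitSeq_succ]; exact hdig j (by omega)

lemma fundamentalInterval_subset_Ioc (n : ℕ) (c : ℕ → ℕ) : fundamentalInterval n c ⊆ Ioc 0 1 :=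
  fun _ hy => hy.1

lemma measurableSet_fundamentalInterval (n : ℕ) (c : ℕ → ℕ) :
    MeasurableSet (fundamentalInterval n c) := by
  induction n generalizing c with
  | zero => rw [fundamentalInterval_zero]; exact measurableSet_Ioc
  | succ n ih =>
    rw [fundamentalInterval_succ, ofPred_and]
    exact (measurable_lurothDigit (measurableSet_singleton _)).inter (measurable_lurothMap (ih _))

lemma volume_fundamentalInterval_inter_preimage {n : ℕ} {c : ℕ → ℕ} (hc : ∀ j < n, 2 ≤ c j)
    {S : Set ℝ} (hS : S ⊆ Ioc 0 1) :
    volume (fundamentalInterval n c ∩ lurothMap^[n] ⁻¹' S) =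
      ENNReal.ofReal (cylinderLength c n) * volume S := by
  induction n generalizing c with
  | zero => simp [fundamentalInterval_zero, cylinderLength, inter_eq_right.mpr hS]
  | succ n ih =>
    have hc0 : 2 ≤ c 0 := hc 0 n.succ_pos
    have hc0' : (2 : ℝ) ≤ c 0 := by exact_mod_cast hc0
    have hsplit : fundamentalInterval (n + 1) c ∩ lurothMap^[n + 1] ⁻¹' S =
        {y | lurothDigit y = c 0 ∧ lurothMap y ∈
          fundamentalInterval n (fun j => c (j + 1)) ∩ lurothMap^[n] ⁻¹' S} := by
      ext y
      simp only [fundamentalInterval_succ, mem_inter_iff, mem_ofPred_eq, mem_preimage,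
        Function.iterate_succ_apply, and_assoc]
    rw [hsplit, volume_setOf_lurothDigit_eq_and_lurothMap_mem hc0
        (inter_subset_left.trans (fundamentalInterval_subset_Ioc _ _)),
      ih (fun j hj => hc (j + 1) (by omega)), ← mul_assoc,
      ← ENNReal.ofReal_mul (one_div_pos.mpr (by nlinarith)).le, cylinderLength, cylinderLength,
      Finset.prod_range_succ', mul_comm (∏ j ∈ _, _)]

lemma abs_sub_le_of_mem_fundamentalInterval {n : ℕ} {c : ℕ → ℕ} {y z : ℝ}
    (hy : y ∈ fundamentalInterval n c) (hz : z ∈ fundamentalInterval n c) :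
    |y - z| ≤ (1 / 2) ^ n := by
  induction n generalizing c y z with
  | zero =>
    rw [fundamentalInterval_zero] at hy hz
    rw [pow_zero, abs_sub_le_iff]
    constructor <;> linarith [hy.1, hy.2, hz.1, hz.2]
  | succ n ih =>
    rw [fundamentalInterval_succ] at hy hz
    have hy0 := mem_Ioc_of_lurothMap_mem_Ioc (fundamentalInterval_subset_Ioc _ _ hy.2)
    have hz0 := mem_Ioc_of_lurothMap_mem_Ioc (fundamentalInterval_subset_Ioc _ _ hz.2)
    have hk : (2 : ℝ) ≤ c 0 := by rw [← hy.1]; exact_mod_cast two_le_lurothDigit hy0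
    have hL : lurothMap y - lurothMap z = c 0 * ((c 0 : ℝ) - 1) * (y - z) := by
      rw [lurothMap_of_ne_zero hy0.1.ne', lurothMap_of_ne_zero hz0.1.ne', hy.1, hz.1]; ring
    have hclose := ih hy.2 hz.2
    rw [hL, abs_mul, abs_of_pos (by nlinarith)] at hclose
    have hk2 : 2 * |y - z| ≤ c 0 * ((c 0 : ℝ) - 1) * |y - z| :=
      mul_le_mul_of_nonneg_right (by nlinarith) (abs_nonneg _)
    rw [pow_succ]
    linarith

lemma tsum_ofReal_one_div_mul_le_one :
    ∑' k : ℕ, ENNReal.ofReal (1 / (((k + 2 : ℕ) : ℝ) * ((k + 2 : ℕ) - 1))) ≤ 1 := by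
  refine ENNReal.tsum_le_of_sum_range_le fun n => ?_
  have htelescope : ∀ k : ℕ, 1 / (((k + 2 : ℕ) : ℝ) * ((k + 2 : ℕ) - 1)) =
      1 / ((k : ℝ) + 1) - 1 / (((k + 1 : ℕ) : ℝ) + 1) := by
    intro k
    push_cast
    rw [show (k : ℝ) + 2 - 1 = k + 1 by ring]
    field_simp
    ring
  rw [← ENNReal.ofReal_sum_of_nonneg fun k _ => by push_cast; ring_nf; positivity,
    ENNReal.ofReal_le_one, Finset.sum_congr rfl fun k _ => htelescope k,
    Finset.sum_range_sub' (fun k : ℕ => 1 / ((k : ℝ) + 1))]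
  simp only [Nat.cast_zero, zero_add, div_one]
  linarith [show (0 : ℝ) ≤ 1 / ((n : ℝ) + 1) by positivity]

lemma volume_preimage_lurothMap_le {S : Set ℝ} (hS : S ⊆ Ioc 0 1) :
    volume (lurothMap ⁻¹' S) ≤ volume S := by
  have hcover : lurothMap ⁻¹' S ⊆ ⋃ k : ℕ, {y | lurothDigit y = k + 2 ∧ lurothMap y ∈ S} := by
    intro y hy
    have := two_le_lurothDigit (mem_Ioc_of_lurothMap_mem_Ioc (hS hy))
    exact mem_iUnion.mpr ⟨lurothDigit y - 2, by omega, hy⟩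
  calc volume (lurothMap ⁻¹' S)
      ≤ ∑' k : ℕ, volume {y | lurothDigit y = k + 2 ∧ lurothMap y ∈ S} :=
        (measure_mono hcover).trans (measure_iUnion_le _)
    _ = ∑' k : ℕ, ENNReal.ofReal (1 / (((k + 2 : ℕ) : ℝ) * ((k + 2 : ℕ) - 1))) * volume S := by
        congr 1; funext k
        exact volume_setOf_lurothDigit_eq_and_lurothMap_mem (by omega) hS
    _ ≤ volume S := by
        rw [ENNReal.tsum_mul_right]
        exact mul_le_of_le_one_left' tsum_ofReal_one_div_mul_le_one

lemma volume_preimage_iterate_lurothMap_le {S : Set ℝ} (hS : S ⊆ Ioc 0 1) (n : ℕ) :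
    volume (lurothMap^[n] ⁻¹' S) ≤ volume S := by
  induction n with
  | zero => rfl
  | succ n ih =>
    rw [Function.iterate_succ, preimage_comp]
    exact (volume_preimage_lurothMap_le (preimage_iterate_lurothMap_subset hS n)).trans ih

/-- The points of `(0,1]` whose digit sequence differs from `t` somewhere in each of the first `J`
blocks of length `m`. -/
noncomputable def blockMissSet (m : ℕ) : ℕ → (ℕ → ℕ) → Set ℝ
  | 0, _ => Ioc 0 1
  | J + 1, t => lurothMap^[m] ⁻¹' blockMissSet m J (fun p => t (m + p)) \ fundamentalInterval m t

lemma blockMissSet_subset_Ioc (m J : ℕ) (t : ℕ → ℕ) : blockMissSet m J t ⊆ Ioc 0 1 := by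
  induction J generalizing t with
  | zero => exact subset_rfl
  | succ J ih => exact sdiff_subset.trans (preimage_iterate_lurothMap_subset (ih _) m)

lemma volume_blockMissSet_succ_le {m J : ℕ} {t : ℕ → ℕ} (ht : ∀ j < m, 2 ≤ t j) :
    volume (blockMissSet m (J + 1) t) ≤
      (1 - ENNReal.ofReal (cylinderLength t m)) *
        volume (blockMissSet m J (fun p => t (m + p))) := by
  set B := blockMissSet m J (fun p => t (m + p))
  have hB : B ⊆ Ioc 0 1 := blockMissSet_subset_Ioc m J _
  have hBfin : volume B ≠ ⊤ := ((measure_mono hB).trans_lt (by simp)).ne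
  have hsplit := measure_sdiff_add_inter (μ := volume) (lurothMap^[m] ⁻¹' B)
    (measurableSet_fundamentalInterval m t)
  rw [inter_comm, volume_fundamentalInterval_inter_preimage ht hB] at hsplit
  rw [ENNReal.sub_mul fun _ _ => hBfin, one_mul]
  exact ENNReal.le_sub_of_add_le_right (ENNReal.mul_ne_top ENNReal.ofReal_ne_top hBfin)
    (hsplit.le.trans (volume_preimage_iterate_lurothMap_le hB m))

lemma pow_le_cylinderLength {n K : ℕ} {c : ℕ → ℕ} (hc : ∀ j, 2 ≤ c j ∧ c j ≤ K) :
    (1 / ((K : ℝ) * (K - 1))) ^ n ≤ cylinderLength c n := by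
  have hK : (2 : ℝ) ≤ K := by exact_mod_cast (hc 0).1.trans (hc 0).2
  have hKK : (0 : ℝ) < K * (K - 1) := by nlinarith
  rw [cylinderLength, Finset.pow_eq_prod_const]
  refine Finset.prod_le_prod (fun _ _ => (one_div_pos.mpr hKK).le) fun j _ => ?_
  have h2 : (2 : ℝ) ≤ c j := by exact_mod_cast (hc j).1
  have hle : (c j : ℝ) ≤ K := by exact_mod_cast (hc j).2
  exact one_div_le_one_div_of_le (by nlinarith) (by nlinarith)

lemma volume_blockMissSet_le {m K : ℕ} {t : ℕ → ℕ} (ht : ∀ p, 2 ≤ t p ∧ t p ≤ K) (J : ℕ) :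
    volume (blockMissSet m J t) ≤ (1 - ENNReal.ofReal ((1 / ((K : ℝ) * (K - 1))) ^ m)) ^ J := by
  induction J generalizing t with
  | zero => simp [blockMissSet]
  | succ J ih =>
    refine (volume_blockMissSet_succ_le fun j _ => (ht j).1).trans ?_
    rw [pow_succ']
    gcongr
    · exact pow_le_cylinderLength ht
    · exact ih fun p => ht (m + p)

noncomputable def targetDigit (K : ℕ) (x : ℝ) (p : ℕ) : ℕ :=
  if 2 ≤ lurothDigitSeq x p ∧ lurothDigitSeq x p < K then lurothDigitSeq x p else K

lemma targetDigit_mem {K : ℕ} (hK : 2 ≤ K) (x : ℝ) (p : ℕ) :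
    2 ≤ targetDigit K x p ∧ targetDigit K x p ≤ K := by
  unfold targetDigit
  split_ifs <;> omega

lemma targetDigit_add (K : ℕ) (x : ℝ) (n p : ℕ) :
    targetDigit K x (n + p) = targetDigit K (lurothMap^[n] x) p := by
  simp only [targetDigit, lurothDigitSeq_add]

/-- Either `x` itself lies in the same fundamental interval of level `m` as `z`, or at a digit
where the target differs from the digit of `x` both orbits are in `[0, 1/(K-1)]`. -/
lemma exists_abs_iterate_sub_le_of_mem_fundamentalInterval {x z : ℝ} (hx : x ∈ Icc (0 : ℝ) 1)
    {m K : ℕ} (hm : 0 < m) (hK : 2 ≤ K) (hz : z ∈ fundamentalInterval m (targetDigit K x)) :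
    ∃ p < m, |lurothMap^[p] x - lurothMap^[p] z| ≤ max ((1 / 2) ^ m) (1 / ((K : ℝ) - 1)) := by
  by_cases hall : ∀ i < m, 2 ≤ lurothDigitSeq x i ∧ lurothDigitSeq x i < K
  · have hx0 : x ∈ Ioc (0 : ℝ) 1 := by
      refine ⟨(eq_or_lt_of_le hx.1).resolve_left ?_, hx.2⟩
      rintro rfl
      simpa [lurothDigitSeq, lurothDigit] using (hall 0 hm).1
    have hxF : x ∈ fundamentalInterval m (targetDigit K x) :=
      ⟨hx0, fun j hj => by rw [targetDigit, if_pos (hall j hj)]⟩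
    refine ⟨0, hm, ?_⟩
    simpa only [Function.iterate_zero, id_eq] using
      (abs_sub_le_of_mem_fundamentalInterval hxF hz).trans (le_max_left _ _)
  push Not at hall
  obtain ⟨i, hi, hbig⟩ := hall
  refine ⟨i, hi, le_trans ?_ (le_max_right _ _)⟩
  have hzI := (mapsTo_lurothMap_Ioc.iterate i) hz.1
  have hzd : lurothDigit (lurothMap^[i] z) = K := by
    rw [← lurothDigitSeq, hz.2 i hi, targetDigit, if_neg fun h => by have := hbig h.1; omega]
  have hz_le := le_of_le_lurothDigit hzI hK hzd.ge
  have hxI : lurothMap^[i] x ∈ Icc (0 : ℝ) 1 := (mapsTo_lurothMap_Icc.iterate i) hx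
  have hx_le : lurothMap^[i] x ≤ 1 / ((K : ℝ) - 1) := by
    rcases eq_or_lt_of_le hxI.1 with h0 | hpos
    · rw [← h0]
      have : (2 : ℝ) ≤ K := by exact_mod_cast hK
      exact one_div_nonneg.mpr (by linarith)
    · have hxI' : lurothMap^[i] x ∈ Ioc (0 : ℝ) 1 := ⟨hpos, hxI.2⟩
      exact le_of_le_lurothDigit hxI' hK (hbig (two_le_lurothDigit hxI'))
  rw [abs_sub_le_iff]
  constructor <;> linarith [hxI.1, hzI.1]

def farSet (x ε : ℝ) : Set ℝ :=
  {z | z ∈ Ioc 0 1 ∧ ∀ n, ε ≤ |lurothMap^[n] x - lurothMap^[n] z|}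

lemma farSet_subset_blockMissSet {x ε : ℝ} (hx : x ∈ Icc (0 : ℝ) 1) {m K : ℕ} (hm : 0 < m)
    (hK : 2 ≤ K) (hε : max ((1 / 2) ^ m) (1 / ((K : ℝ) - 1)) < ε) (J : ℕ) :
    farSet x ε ⊆ blockMissSet m J (targetDigit K x) := by
  induction J generalizing x with
  | zero => exact fun z hz => hz.1
  | succ J ih =>
    intro z hz
    refine ⟨?_, fun hzF => ?_⟩
    · rw [mem_preimage, funext fun p => targetDigit_add K x m p]
      refine ih ((mapsTo_lurothMap_Icc.iterate m) hx)
        ⟨(mapsTo_lurothMap_Ioc.iterate m) hz.1, fun n => ?_⟩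
      simpa only [← Function.iterate_add_apply] using hz.2 (n + m)
    · obtain ⟨p, -, hp⟩ := exists_abs_iterate_sub_le_of_mem_fundamentalInterval hx hm hK hzF
      exact (hz.2 p).not_gt (hp.trans_lt hε)

lemma volume_farSet {x ε : ℝ} (hx : x ∈ Icc (0 : ℝ) 1) (hε : 0 < ε) : volume (farSet x ε) = 0 := by
  obtain ⟨m, hm⟩ := exists_pow_lt_of_lt_one hε (by norm_num : (1 / 2 : ℝ) < 1)
  obtain ⟨k, hk⟩ := exists_nat_one_div_lt hε
  have hmax : max ((1 / 2) ^ (m + 1)) (1 / (((k + 2 : ℕ) : ℝ) - 1)) < ε := by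
    refine max_lt ((pow_le_pow_of_le_one (by norm_num) (by norm_num) m.le_succ).trans_lt hm) ?_
    push_cast
    rwa [show (k : ℝ) + 2 - 1 = k + 1 by ring]
  set δ := ENNReal.ofReal ((1 / (((k + 2 : ℕ) : ℝ) * ((k + 2 : ℕ) - 1))) ^ (m + 1))
  have hδ : 0 < δ := by
    refine ENNReal.ofReal_pos.mpr (pow_pos (one_div_pos.mpr ?_) _)
    push_cast
    nlinarith
  have htend : Tendsto (fun J : ℕ => (1 - δ) ^ J) atTop (nhds 0) :=
    ENNReal.tendsto_pow_atTop_nhds_zero_of_lt_one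
      (ENNReal.sub_lt_self ENNReal.one_ne_top one_ne_zero hδ.ne')
  refine le_antisymm (ge_of_tendsto' htend fun J => ?_) bot_le
  exact (measure_mono (farSet_subset_blockMissSet hx m.succ_pos (by omega) hmax J)).trans
    (volume_blockMissSet_le (fun p => targetDigit_mem (by omega) x p) J)

lemma exists_iterate_mem_farSet {x y : ℝ} (hy : y ∈ Ioc (0 : ℝ) 1)
    (h : 0 < atTop.liminf fun n => |lurothMap^[n] x - lurothMap^[n] y|) :
    ∃ i N : ℕ, lurothMap^[N + 1] y ∈ farSet (lurothMap^[N + 1] x) (1 / ((i : ℝ) + 1)) := by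
  obtain ⟨i, hi⟩ := exists_nat_one_div_lt h
  obtain ⟨N, hN⟩ := eventually_atTop.mp
    (eventually_lt_of_lt_liminf hi (isBoundedUnder_of ⟨0, fun n => abs_nonneg _⟩))
  refine ⟨i, N, (mapsTo_lurothMap_Ioc.iterate _) hy, fun n => ?_⟩
  simpa only [← Function.iterate_add_apply] using (hN (n + (N + 1)) (by omega)).le

theorem volume_distalSet_eq_zero_general (x : ℝ) :
    MeasureTheory.volume {y | y ∈ Set.Icc (0 : ℝ) 1 ∧
      0 < Filter.atTop.liminf (fun n => |lurothMap^[n] x - lurothMap^[n] y|)} = 0 := by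
  have hcover : {y | y ∈ Icc (0 : ℝ) 1 ∧
      0 < atTop.liminf (fun n => |lurothMap^[n] x - lurothMap^[n] y|)} ⊆
      {0} ∪ ⋃ (i : ℕ) (N : ℕ),
        lurothMap^[N + 1] ⁻¹' farSet (lurothMap^[N + 1] x) (1 / ((i : ℝ) + 1)) := by
    rintro y ⟨hy, hlim⟩
    rcases eq_or_lt_of_le hy.1 with h0 | hpos
    · exact Or.inl h0.symm
    · obtain ⟨i, N, hiN⟩ := exists_iterate_mem_farSet ⟨hpos, hy.2⟩ hlim
      exact Or.inr (mem_iUnion₂.mpr ⟨i, N, hiN⟩)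
  refine measure_mono_null hcover (measure_union_null (measure_singleton 0)
    (measure_iUnion_null fun i => measure_iUnion_null fun N => le_antisymm ?_ bot_le))
  have hxN : lurothMap^[N + 1] x ∈ Icc (0 : ℝ) 1 := by
    rw [Function.iterate_succ_apply']; exact lurothMap_mem_Icc _
  calc volume (lurothMap^[N + 1] ⁻¹' farSet (lurothMap^[N + 1] x) (1 / ((i : ℝ) + 1)))
      ≤ volume (farSet (lurothMap^[N + 1] x) (1 / ((i : ℝ) + 1))) :=
        volume_preimage_iterate_lurothMap_le (fun _ hz => hz.1) _
    _ = 0 := volume_farSet hxN (by positivity)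

/-- For every `x ∈ [0,1]`, the distal set
`D_L(x) = {y : liminf |Lⁿ(x) - Lⁿ(y)| > 0}` has Lebesgue measure zero. -/
theorem volume_distalSet_eq_zero (x : ℝ) (hx : x ∈ Set.Icc (0 : ℝ) 1) :
    MeasureTheory.volume {y | y ∈ Set.Icc (0 : ℝ) 1 ∧
      0 < Filter.atTop.liminf (fun n => |lurothMap^[n] x - lurothMap^[n] y|)} = 0 :=
  volume_distalSet_eq_zero_general x
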